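/- (Deterministic core of Corollary 2: the oracle barycenter is a local maximum of the rectified Grassmannian objective.) Fix K ≥ 1, orthogonal projection matrices P̃₁,…,P̃_K ∈ ℝ^{p×p}, positive weights n₁,…,n_K, real numbers r₁,…,r_K, a subset ℐ ⊆ {1,…,K}, and τ ∈ ℝ. Let 𝒫 denote the set of orthogonal projection matrices P ∈ ℝ^{p×p} with tr(P) = p₀, and define F(P) := Σ_{k=1}^{K} n_k max{ tr(P̃_k P), r_k − τ }. Suppose P★ ∈ 𝒫 satisfies: (i) Σ_{k∈ℐ} n_k tr(P̃_k P) ≤ Σ_{k∈ℐ} n_k tr(P̃_k P★) for every P ∈ 𝒫; (ii) tr(P̃_k P★) > r_k − τ for every k ∈ ℐ; and (iii) tr(P̃_k P★) < r_k − τ for every k ∉ ℐ. Then P★ is a local maximum of F on 𝒫: there exists ε > 0 such that F(P) ≤ F(P★) for every P ∈ 𝒫 with ‖P − P★‖_F < ε. -/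

import Mathlib

open Matrix

/-- Frobenius norm of a real matrix. -/
noncomputable def frobNorm {m n : ℕ} (A : Matrix (Fin m) (Fin n) ℝ) : ℝ :=
  Real.sqrt (Matrix.trace (Aᵀ * A))

/-!
Near `P★` the strict inequalities (ii) and (iii) persist by continuity of `P ↦ tr(P̃ₖ P)`, so
every `max` in `F` is attained by the same argument as at `P★`. Locally `F` is therefore the
oracle objective over `ℐ` plus a constant, and (i) says that `P★` maximizes it.
-/

open Filter Topology

theorem isLocalMaxOn_sum_mul_max {X ι : Type*} [TopologicalSpace X] [Fintype ι] [DecidableEq ι]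
    {f : ι → X → ℝ} {S : Set X} {x₀ : X} (hf : ∀ k, ContinuousAt (f k) x₀)
    (w c : ι → ℝ) (I : Finset ι)
    (hOpt : ∀ x ∈ S, ∑ k ∈ I, w k * f k x ≤ ∑ k ∈ I, w k * f k x₀)
    (hIn : ∀ k ∈ I, c k < f k x₀) (hOut : ∀ k ∉ I, f k x₀ < c k) :
    IsLocalMaxOn (fun x ↦ ∑ k, w k * max (f k x) (c k)) S x₀ := by
  have hsplit : ∀ x, (∀ k, max (f k x) (c k) = if k ∈ I then f k x else c k) →
      ∑ k, w k * max (f k x) (c k) = ∑ k ∈ I, w k * f k x + ∑ k ∈ Iᶜ, w k * c k := by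
    intro x hx
    rw [← Finset.sum_add_sum_compl I]
    congr 1 <;> refine Finset.sum_congr rfl fun k hk ↦ ?_ <;> simp_all
  have hnear : ∀ᶠ x in 𝓝 x₀, ∀ k, max (f k x) (c k) = if k ∈ I then f k x else c k := by
    refine eventually_all.2 fun k ↦ ?_
    by_cases hk : k ∈ I
    · filter_upwards [(hf k).eventually (lt_mem_nhds (hIn k hk))] with x hx
      simp [hk, hx.le]
    · filter_upwards [(hf k).eventually (gt_mem_nhds (hOut k hk))] with x hx
      simp [hk, hx.le]
  filter_upwards [nhdsWithin_le_nhds hnear, self_mem_nhdsWithin] with x hx hxS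
  rw [hsplit x hx, hsplit x₀ hnear.self_of_nhds]
  exact add_le_add_left (hOpt x hxS) _

section Frobenius

attribute [local instance] Matrix.frobeniusNormedAddCommGroup

theorem frobNorm_eq_norm {m n : ℕ} (A : Matrix (Fin m) (Fin n) ℝ) : frobNorm A = ‖A‖ := by
  rw [frobNorm, frobenius_norm_def, Real.sqrt_eq_rpow, trace, Finset.sum_comm]
  simp [sq, mul_apply]

theorem IsLocalMaxOn.exists_frobNorm_sub_lt {m n : ℕ} {g : Matrix (Fin m) (Fin n) ℝ → ℝ}
    {S : Set (Matrix (Fin m) (Fin n) ℝ)} {A : Matrix (Fin m) (Fin n) ℝ}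
    (h : IsLocalMaxOn g S A) : ∃ ε > 0, ∀ B ∈ S, frobNorm (B - A) < ε → g B ≤ g A := by
  -- the Frobenius metric induces the product topology, in which `h` is stated
  obtain ⟨ε, hε, hball⟩ := Metric.eventually_nhds_iff.1 (eventually_nhdsWithin_iff.1 h)
  refine ⟨ε, hε, fun B hB hBA ↦ hball ?_ hB⟩
  rwa [dist_eq_norm, ← frobNorm_eq_norm]

end Frobenius

theorem oracle_local_maximum_rectified_general {p p₀ K : ℕ}
    (Ptil : Fin K → Matrix (Fin p) (Fin p) ℝ)
    (n : Fin K → ℝ)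
    (r : Fin K → ℝ) (I : Finset (Fin K)) (τ : ℝ)
    (Pstar : Matrix (Fin p) (Fin p) ℝ)
    (hOpt : ∀ P : Matrix (Fin p) (Fin p) ℝ, Pᵀ = P → P * P = P →
      Matrix.trace P = (p₀ : ℝ) →
      ∑ k ∈ I, n k * Matrix.trace (Ptil k * P) ≤
        ∑ k ∈ I, n k * Matrix.trace (Ptil k * Pstar))
    (hIn : ∀ k ∈ I, r k - τ < Matrix.trace (Ptil k * Pstar))
    (hOut : ∀ k ∉ I, Matrix.trace (Ptil k * Pstar) < r k - τ) :
    ∃ ε > 0, ∀ P : Matrix (Fin p) (Fin p) ℝ, Pᵀ = P → P * P = P →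
      Matrix.trace P = (p₀ : ℝ) → frobNorm (P - Pstar) < ε →
      ∑ k : Fin K, n k * max (Matrix.trace (Ptil k * P)) (r k - τ) ≤
        ∑ k : Fin K, n k * max (Matrix.trace (Ptil k * Pstar)) (r k - τ) := by
  have hmax : IsLocalMaxOn (fun P ↦ ∑ k, n k * max (trace (Ptil k * P)) (r k - τ))
      {P | Pᵀ = P ∧ P * P = P ∧ trace P = (p₀ : ℝ)} Pstar :=
    isLocalMaxOn_sum_mul_max (fun k ↦ by fun_prop) n (fun k ↦ r k - τ) I
      (fun P ⟨hsymm, hidem, htr⟩ ↦ hOpt P hsymm hidem htr) hIn hOut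
  obtain ⟨ε, hε, hlocal⟩ := hmax.exists_frobNorm_sub_lt
  exact ⟨ε, hε, fun P hsymm hidem htr ↦ hlocal P ⟨hsymm, hidem, htr⟩⟩

/-- Deterministic core of Corollary 2: under separation conditions (ii), (iii) and the
oracle optimality (i) over the informative set ℐ, the oracle barycenter P★ is a local
maximum of the rectified Grassmannian objective
F(P) = Σ_k n_k max{tr(P̃_k P), r_k − τ} over rank-p₀ orthogonal projections. -/
theorem oracle_local_maximum_rectified {p p₀ K : ℕ} (hK : 1 ≤ K)
    (Ptil : Fin K → Matrix (Fin p) (Fin p) ℝ)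
    (hPtilsymm : ∀ k, (Ptil k)ᵀ = Ptil k) (hPtilidem : ∀ k, Ptil k * Ptil k = Ptil k)
    (n : Fin K → ℝ) (hn : ∀ k, 0 < n k)
    (r : Fin K → ℝ) (I : Finset (Fin K)) (τ : ℝ)
    (Pstar : Matrix (Fin p) (Fin p) ℝ)
    (hPstar : Pstarᵀ = Pstar ∧ Pstar * Pstar = Pstar ∧ Matrix.trace Pstar = (p₀ : ℝ))
    (hOpt : ∀ P : Matrix (Fin p) (Fin p) ℝ, Pᵀ = P → P * P = P →
      Matrix.trace P = (p₀ : ℝ) →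
      ∑ k ∈ I, n k * Matrix.trace (Ptil k * P) ≤
        ∑ k ∈ I, n k * Matrix.trace (Ptil k * Pstar))
    (hIn : ∀ k ∈ I, r k - τ < Matrix.trace (Ptil k * Pstar))
    (hOut : ∀ k ∉ I, Matrix.trace (Ptil k * Pstar) < r k - τ) :
    ∃ ε > 0, ∀ P : Matrix (Fin p) (Fin p) ℝ, Pᵀ = P → P * P = P →
      Matrix.trace P = (p₀ : ℝ) → frobNorm (P - Pstar) < ε →
      ∑ k : Fin K, n k * max (Matrix.trace (Ptil k * P)) (r k - τ) ≤
        ∑ k : Fin K, n k * max (Matrix.trace (Ptil k * Pstar)) (r k - τ) :=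
  oracle_local_maximum_rectified_general Ptil n r I τ Pstar hOpt hIn hOut
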